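/- Let G = (A, (SPath^{T_i}_w)_{i∈[n]}) be an n-player shortest-path game on a possibly infinite arena in which all players share the same weight function w : E → ℕ. If there exists a Nash equilibrium from v_0 in whose outcome no player's target is visited, then there exists a Nash equilibrium from v_0 in whose outcome no player's target is visited and in which every strategy is finite-memory with memory size at most n. -/
import Mathlib


open scoped ENNReal Classical

/-- An `n`-player arena on a (possibly infinite) directed graph: an edge relation
with no deadlocks, together with an assignment of each vertex to its owner. -/
structure Arena (V : Type) (n : ℕ) where
  E : V → V → Prop
  owner : V → Fin n
  no_deadlock : ∀ v, ∃ v', E v v'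

namespace Arena

variable {V : Type} {n : ℕ}

/-- A play: an infinite sequence of vertices following edges. -/
def IsPlay (A : Arena V n) (π : ℕ → V) : Prop := ∀ j, A.E (π j) (π (j + 1))

/-- A strategy: given the past history (the earlier vertices, oldest first) and the
current vertex, pick an `E`-successor of the current vertex. -/
structure Strategy (A : Arena V n) where
  next : List V → V → V
  valid : ∀ h v, A.E v (next h v)

/-- The list of the first `j` vertices of a play. -/
def pref (π : ℕ → V) (j : ℕ) : List V := (List.range j).map π

/-- A play is consistent with the strategy `σ` used by player `i`. -/
def Consistent (A : Arena V n) (i : Fin n) (σ : A.Strategy) (π : ℕ → V) : Prop :=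
  ∀ j, A.owner (π j) = i → π (j + 1) = σ.next (pref π j) (π j)

/-- A memoryless strategy only depends on the current vertex. -/
def Memoryless {A : Arena V n} (σ : A.Strategy) : Prop :=
  ∀ h h' v, σ.next h v = σ.next h' v

def outcomeAux (A : Arena V n) (σ : Fin n → A.Strategy) (v0 : V) : ℕ → List V × V
  | 0 => ([], v0)
  | j + 1 =>
      let p := outcomeAux A σ v0 j
      (p.1 ++ [p.2], (σ (A.owner p.2)).next p.1 p.2)

/-- The outcome of the strategy profile `σ` from `v0`: the unique play from `v0`
consistent with every strategy of the profile. -/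
def outcome (A : Arena V n) (σ : Fin n → A.Strategy) (v0 : V) (j : ℕ) : V :=
  (outcomeAux A σ v0 j).2

/-- Reachability objective: visit `T`. -/
def ReachObj (T : Set V) : Set (ℕ → V) := {π | ∃ j, π j ∈ T}

/-- Safety objective: never visit `T`. -/
def SafeObj (T : Set V) : Set (ℕ → V) := {π | ∀ j, π j ∉ T}

/-- Büchi objective: visit `T` infinitely often. -/
def BuchiObj (T : Set V) : Set (ℕ → V) := {π | ∀ j, ∃ k, j ≤ k ∧ π k ∈ T}

/-- co-Büchi objective: visit `T` only finitely often. -/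
def CoBuchiObj (T : Set V) : Set (ℕ → V) := {π | ∃ j, ∀ k, j ≤ k → π k ∉ T}

/-- Shortest-path cost of a play: the total weight up to the first visit of `T`,
and `⊤` if `T` is never visited. -/
noncomputable def spCost (w : V → V → ℕ) (T : Set V) (π : ℕ → V) : ℝ≥0∞ :=
  if ∃ k, π k ∈ T then
    (Finset.range (sInf {k | π k ∈ T})).sum fun j => (w (π j) (π (j + 1)) : ℝ≥0∞)
  else ⊤

/-- Winning region of player `p` (whose objective is `Ω`) in a two-player game:
vertices from which `p` has a strategy all of whose consistent plays lie in `Ω`. -/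
def WinRegion (A : Arena V 2) (p : Fin 2) (Ω : Set (ℕ → V)) : Set V :=
  {v | ∃ σ : A.Strategy, ∀ π, A.IsPlay π → π 0 = v → A.Consistent p σ π → π ∈ Ω}

/-- Lower value `inf_{σ₁} sup_{σ₂}` of a two-player zero-sum game with cost `c`
(minimised by player 1, maximised by player 2). -/
noncomputable def valIS (A : Arena V 2) (c : (ℕ → V) → ℝ≥0∞) (v : V) : ℝ≥0∞ :=
  ⨅ σ1 : A.Strategy, ⨆ σ2 : A.Strategy, c (outcome A ![σ1, σ2] v)

/-- Upper value `sup_{σ₂} inf_{σ₁}`. -/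
noncomputable def valSI (A : Arena V 2) (c : (ℕ → V) → ℝ≥0∞) (v : V) : ℝ≥0∞ :=
  ⨆ σ2 : A.Strategy, ⨅ σ1 : A.Strategy, c (outcome A ![σ1, σ2] v)

/-- Nash equilibrium from `v0` for cost functions (each player minimises):
no unilateral deviation decreases the deviator's cost. -/
def IsNECost (A : Arena V n) (cost : Fin n → (ℕ → V) → ℝ≥0∞)
    (σ : Fin n → A.Strategy) (v0 : V) : Prop :=
  ∀ (i : Fin n) (τ : A.Strategy),
    cost i (outcome A σ v0) ≤ cost i (outcome A (Function.update σ i τ) v0)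

/-- Nash equilibrium from `v0` for objectives: if a unilateral deviation of player `i`
satisfies `Ω i`, then so does the equilibrium outcome. -/
def IsNEObj (A : Arena V n) (Ω : Fin n → Set (ℕ → V))
    (σ : Fin n → A.Strategy) (v0 : V) : Prop :=
  ∀ (i : Fin n) (τ : A.Strategy),
    outcome A (Function.update σ i τ) v0 ∈ Ω i → outcome A σ v0 ∈ Ω i

/-- The coalition arena of player `i`: player `i` (as player `0`) against all others. -/
def coalition (A : Arena V n) (i : Fin n) : Arena V 2 where
  E := A.E
  owner := fun v => if A.owner v = i then 0 else 1
  no_deadlock := A.no_deadlock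

/-- Winning region of player `i` in their coalition game for objective `Ω`. -/
def coalWin (A : Arena V n) (i : Fin n) (Ω : Set (ℕ → V)) : Set V :=
  WinRegion (coalition A i) 0 Ω

/-- Value of a vertex in player `i`'s coalition game with cost `c`. -/
noncomputable def coalVal (A : Arena V n) (i : Fin n) (c : (ℕ → V) → ℝ≥0∞) (v : V) :
    ℝ≥0∞ :=
  valIS (coalition A i) c v

/-- Players whose reachability objective is satisfied by `π`. -/
def satReach (T : Fin n → Set V) (π : ℕ → V) : Set (Fin n) := {i | ∃ j, π j ∈ T i}

/-- Players whose safety objective is satisfied by `π`. -/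
def satSafe (T : Fin n → Set V) (π : ℕ → V) : Set (Fin n) := {i | ∀ j, π j ∉ T i}

/-- Players whose Büchi objective is satisfied by `π`. -/
def satBuchi (T : Fin n → Set V) (π : ℕ → V) : Set (Fin n) :=
  {i | ∀ j, ∃ k, j ≤ k ∧ π k ∈ T i}

/-- Players whose co-Büchi objective is satisfied by `π`. -/
def satCoBuchi (T : Fin n → Set V) (π : ℕ → V) : Set (Fin n) :=
  {i | ∃ j, ∀ k, j ≤ k → π k ∉ T i}

/-- Earliest positions at which the targets visited by `π` are first visited. -/
def visitSet (T : Fin n → Set V) (π : ℕ → V) : Set ℕ :=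
  {m | ∃ i, (∃ j, π j ∈ T i) ∧ m = sInf {j | π j ∈ T i}}

/-- A Mealy machine with memory states `M`. -/
structure Mealy (A : Arena V n) (M : Type) where
  init : M
  up : M → V → M
  nxt : M → V → V
  valid : ∀ m v, A.E v (nxt m v)

/-- The strategy `σ` is induced by the Mealy machine `mm`. -/
def InducedBy {A : Arena V n} {M : Type} (σ : A.Strategy) (mm : Mealy A M) : Prop :=
  ∀ h v, σ.next h v = mm.nxt (h.foldl mm.up mm.init) v

/-- `σ` has memory size at most `b`. -/
def HasMemorySize {A : Arena V n} (σ : A.Strategy) (b : ℕ) : Prop :=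
  ∃ (M : Type) (mm : Mealy A M), Finite M ∧ Nat.card M ≤ b ∧ InducedBy σ mm

/-- `σ` is a finite-memory strategy. -/
def FiniteMemory {A : Arena V n} (σ : A.Strategy) : Prop :=
  ∃ (M : Type) (mm : Mealy A M), Finite M ∧ InducedBy σ mm

/-- The (finite) segment of `π` between positions `a` and `b` is a simple history. -/
def SimpleSeg (π : ℕ → V) (a b : ℕ) : Prop :=
  ∀ m m', a ≤ m → m ≤ b → a ≤ m' → m' ≤ b → π m = π m' → m = m'

/-- The suffix of `π` from position `a` is a simple play. -/
def SimplePlaySeg (π : ℕ → V) (a : ℕ) : Prop :=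
  ∀ m m', a ≤ m → a ≤ m' → π m = π m' → m = m'

/-- The suffix of `π` from position `a` is a simple lasso `p c^ω` with `p c`
a simple history. -/
def SimpleLassoSeg (π : ℕ → V) (a : ℕ) : Prop :=
  ∃ k ℓ, 0 < ℓ ∧ (∀ m, a + k ≤ m → π (m + ℓ) = π m) ∧
    ∀ m m', a ≤ m → m < a + k + ℓ → a ≤ m' → m' < a + k + ℓ → π m = π m' → m = m'

/-- The segment of `π` between positions `a` and `b` is a simple cycle. -/
def SimpleCycleSeg (π : ℕ → V) (a b : ℕ) : Prop :=
  a < b ∧ π b = π a ∧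
    ∀ m m', a ≤ m → m < b → a ≤ m' → m' < b → π m = π m' → m = m'

/-- Total weight of a history (a list of vertices). -/
def histWeight (w : V → V → ℕ) : List V → ℕ
  | [] => 0
  | [_] => 0
  | a :: b :: t => w a b + histWeight w (b :: t)

/-- The list of vertices along positions `a..b` (inclusive) of a play. -/
def segList (π : ℕ → V) (a b : ℕ) : List V :=
  (List.range (b - a + 1)).map fun m => π (a + m)

/-- The segment of `π` between positions `a` and `b` has minimal weight among all
histories that share its first and last vertex and traverse only its vertices. -/
def MinWeightSeg (A : Arena V n) (w : V → V → ℕ) (π : ℕ → V) (a b : ℕ) : Prop :=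
  ∀ h : List V, h ≠ [] → List.Chain' A.E h →
    h.head? = some (π a) → h.getLast? = some (π b) →
    (∀ x ∈ h, ∃ m, a ≤ m ∧ m ≤ b ∧ π m = x) →
    histWeight w (segList π a b) ≤ histWeight w h

/-- Given cut positions `p`, segments number `l` and `l'` of `π` carry the same
vertex sequence. -/
def SegEq (π : ℕ → V) (p : ℕ → ℕ) (l l' : ℕ) : Prop :=
  p (l' + 1) - p l' = p (l + 1) - p l ∧
    ∀ m, m ≤ p (l + 1) - p l → π (p l' + m) = π (p l + m)

/-- There is no cycle of the arena using only vertices of `S` and avoiding `avoid`. -/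
def NoCycleAvoid (A : Arena V n) (S : Set V) (avoid : V) : Prop :=
  ¬ ∃ (m : ℕ) (c : ℕ → V), 0 < m ∧ (∀ j, j < m → A.E (c j) (c (j + 1))) ∧
      c m = c 0 ∧ ∀ j, j ≤ m → c j ∈ S ∧ c j ≠ avoid

end Arena

open Arena

section Aux

variable {V : Type} {n : ℕ}

lemma pref_succ' (π : ℕ → V) (j : ℕ) : pref π (j + 1) = pref π j ++ [π j] := by
  simp [pref, List.range_succ]

lemma pref_length' (π : ℕ → V) (j : ℕ) : (pref π j).length = j := by
  simp [pref]

lemma outcomeAux_fst (A : Arena V n) (σ : Fin n → A.Strategy) (v0 : V) (j : ℕ) :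
    (outcomeAux A σ v0 j).1 = pref (outcome A σ v0) j := by
  induction j with
  | zero => simp [outcomeAux, pref]
  | succ j ih =>
    rw [pref_succ']
    show (outcomeAux A σ v0 j).1 ++ [(outcomeAux A σ v0 j).2] = _
    rw [ih]; rfl

lemma outcome_succ' (A : Arena V n) (σ : Fin n → A.Strategy) (v0 : V) (j : ℕ) :
    outcome A σ v0 (j + 1) =
      (σ (A.owner (outcome A σ v0 j))).next (pref (outcome A σ v0) j)
        (outcome A σ v0 j) := by
  show (σ (A.owner (outcomeAux A σ v0 j).2)).next (outcomeAux A σ v0 j).1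
      (outcomeAux A σ v0 j).2 = _
  rw [outcomeAux_fst]; rfl

lemma isPlay_outcome (A : Arena V n) (σ : Fin n → A.Strategy) (v0 : V) :
    A.IsPlay (outcome A σ v0) := by
  intro j
  rw [outcome_succ']
  exact (σ _).valid _ _

lemma spCost_eq_top_iff (w : V → V → ℕ) (T : Set V) (π : ℕ → V) :
    spCost w T π = ⊤ ↔ ∀ k, π k ∉ T := by
  constructor
  · intro h k hk
    rw [spCost, if_pos ⟨k, hk⟩] at h
    exact absurd h (ENNReal.sum_lt_top.2 (fun j _ => ENNReal.natCast_lt_top _)).ne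
  · intro h
    rw [spCost, if_neg]
    rintro ⟨k, hk⟩
    exact h k hk

/-- Vertices reachable from `v0` when all players except `i` follow `σ'`. -/
def devReach (A : Arena V n) (σ' : Fin n → A.Strategy) (v0 : V) (i : Fin n) : Set V :=
  {v | ∃ (τ : A.Strategy) (k : ℕ), outcome A (Function.update σ' i τ) v0 k = v}

lemma devReach_succ (A : Arena V n) (σ' : Fin n → A.Strategy) (v0 : V) (i : Fin n)
    {v : V} (hv : v ∈ devReach A σ' v0 i) :
    ∃ v', A.E v v' ∧ v' ∈ devReach A σ' v0 i := by
  obtain ⟨τ, k, rfl⟩ := hv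
  exact ⟨_, isPlay_outcome _ _ _ k, τ, k + 1, rfl⟩

lemma devReach_closed (A : Arena V n) (σ' : Fin n → A.Strategy) (v0 : V) (i : Fin n)
    {v : V} (hv : v ∈ devReach A σ' v0 i) (ho : A.owner v = i)
    {v' : V} (hE : A.E v v') : v' ∈ devReach A σ' v0 i := by
  classical
  obtain ⟨τ, k, rfl⟩ := hv
  set ρ : ℕ → V := outcome A (Function.update σ' i τ) v0 with hρ
  have hEρ : A.E (ρ k) v' := hE
  have hval : ∀ (h : List V) (u : V),
      A.E u (if h = pref ρ k ∧ u = ρ k then v' else τ.next h u) := by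
    intro h u
    split_ifs with hc
    · rw [hc.2]; exact hEρ
    · exact τ.valid h u
  set τ' : A.Strategy :=
    ⟨fun h u => if h = pref ρ k ∧ u = ρ k then v' else τ.next h u,
      fun h u => hval h u⟩ with hτ'
  refine ⟨τ', k + 1, ?_⟩
  · show outcome A (Function.update σ' i τ') v0 (k + 1) = v'
    have key : ∀ j, j ≤ k → outcomeAux A (Function.update σ' i τ') v0 j
        = outcomeAux A (Function.update σ' i τ) v0 j := by
      intro j hj
      induction j with
      | zero => rfl
      | succ j ih =>
        have hjk : j ≤ k := Nat.le_of_succ_le hj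
        have e := ih hjk
        show ((outcomeAux A (Function.update σ' i τ') v0 j).1
                ++ [(outcomeAux A (Function.update σ' i τ') v0 j).2],
              ((Function.update σ' i τ')
                  (A.owner (outcomeAux A (Function.update σ' i τ') v0 j).2)).next
                (outcomeAux A (Function.update σ' i τ') v0 j).1
                (outcomeAux A (Function.update σ' i τ') v0 j).2)
            = ((outcomeAux A (Function.update σ' i τ) v0 j).1
                ++ [(outcomeAux A (Function.update σ' i τ) v0 j).2],
              ((Function.update σ' i τ)
                  (A.owner (outcomeAux A (Function.update σ' i τ) v0 j).2)).next
                (outcomeAux A (Function.update σ' i τ) v0 j).1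
                (outcomeAux A (Function.update σ' i τ) v0 j).2)
        rw [e]
        congr 1
        by_cases hoj : A.owner (outcomeAux A (Function.update σ' i τ) v0 j).2 = i
        · rw [hoj, Function.update_self]
          show (if (outcomeAux A (Function.update σ' i τ) v0 j).1 = pref ρ k ∧ _ then v'
            else τ.next _ _) = _
          rw [if_neg, Function.update_self]
          rintro ⟨h1, -⟩
          have hlen := congrArg List.length h1
          rw [outcomeAux_fst, pref_length', pref_length'] at hlen
          exact absurd hlen (Nat.ne_of_lt hj)
        · rw [Function.update_of_ne hoj, Function.update_of_ne hoj]
    show ((Function.update σ' i τ')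
        (A.owner (outcomeAux A (Function.update σ' i τ') v0 k).2)).next
      (outcomeAux A (Function.update σ' i τ') v0 k).1
      (outcomeAux A (Function.update σ' i τ') v0 k).2 = v'
    rw [key k le_rfl, outcomeAux_fst]
    have hp2 : (outcomeAux A (Function.update σ' i τ) v0 k).2 = ρ k := rfl
    rw [hp2, show A.owner (ρ k) = i from ho, Function.update_self]
    show (if pref ρ k = pref ρ k ∧ ρ k = ρ k then v' else _) = v'
    rw [if_pos ⟨rfl, rfl⟩]

end Aux

/-- In shortest-path games with a shared weight function, if there is
an NE from `v0` whose outcome visits no player's target, then there is such an NE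
whose strategies all have memory size at most `n`. -/
theorem spath_fm_ne_linear_memory
    (V : Type) (n : ℕ) (A : Arena V n) (T : Fin n → Set V) (w : V → V → ℕ)
    (v0 : V) :
    (∃ σ' : Fin n → A.Strategy,
        A.IsNECost (fun i => spCost w (T i)) σ' v0 ∧
          ∀ i, ∀ k, outcome A σ' v0 k ∉ T i) →
      ∃ σ : Fin n → A.Strategy,
        A.IsNECost (fun i => spCost w (T i)) σ v0 ∧
        (∀ i, ∀ k, outcome A σ v0 k ∉ T i) ∧
        ∀ i, HasMemorySize (σ i) n := by
  classical
  rintro ⟨σ', hNE, hAv⟩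
  set π' : ℕ → V := outcome A σ' v0 with hπ'
  set Y : Set V := Set.range π' with hY
  set R : Fin n → Set V := devReach A σ' v0 with hRdef
  -- every deviation of player i avoids T i
  have hdevAvoid : ∀ (i : Fin n) (τ : A.Strategy) (k : ℕ),
      outcome A (Function.update σ' i τ) v0 k ∉ T i := by
    intro i τ
    have h1 : spCost w (T i) (outcome A σ' v0) = ⊤ :=
      (spCost_eq_top_iff _ _ _).2 (hAv i)
    have h2 := hNE i τ
    simp only [h1, top_le_iff] at h2
    exact (spCost_eq_top_iff _ _ _).1 h2
  have hRT : ∀ i v, v ∈ R i → v ∉ T i := by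
    rintro i v ⟨τ, k, rfl⟩
    exact hdevAvoid i τ k
  have hYR : ∀ v, v ∈ Y → ∀ i, v ∈ R i := by
    rintro v ⟨k, rfl⟩ i
    exact ⟨σ' i, k, by rw [Function.update_eq_self]⟩
  -- choice of a "conforming" successor
  have hgex : ∀ v, ∃ v', A.E v v' ∧ (v ∈ Y → v' ∈ Y) := by
    intro v
    by_cases h : v ∈ Y
    · obtain ⟨k, rfl⟩ := h
      exact ⟨π' (k + 1), isPlay_outcome _ _ _ k, fun _ => ⟨k + 1, rfl⟩⟩
    · obtain ⟨v', h1⟩ := A.no_deadlock v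
      exact ⟨v', h1, fun hh => absurd hh h⟩
  choose g hg1 hg2 using hgex
  -- choice of a "punishing" successor
  have hfex : ∀ (m : Fin n) (v : V), ∃ v', A.E v v' ∧ (v ∈ R m → v' ∈ R m) := by
    intro m v
    by_cases h : v ∈ R m
    · obtain ⟨v', h1, h2⟩ := devReach_succ A σ' v0 m h
      exact ⟨v', h1, fun _ => h2⟩
    · obtain ⟨v', h1⟩ := A.no_deadlock v
      exact ⟨v', h1, fun hh => absurd hh h⟩
  choose f hf1 hf2 using hfex
  -- the common Mealy machine
  set nx : Fin n → V → V := fun m v => if v ∈ Y then g v else f m v with hnx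
  set up : Fin n → V → Fin n := fun m v => if v ∈ Y then A.owner v else m with hup
  have hnxE : ∀ m v, A.E v (nx m v) := by
    intro m v
    show A.E v (if v ∈ Y then g v else f m v)
    split_ifs
    · exact hg1 v
    · exact hf1 m v
  set mm : Mealy A (Fin n) := ⟨A.owner v0, up, nx, hnxE⟩ with hmm
  set σ : Fin n → A.Strategy :=
    fun _ => ⟨fun h v => nx (h.foldl up (A.owner v0)) v, fun h v => hnxE _ v⟩ with hσ
  have hfold : ∀ (π : ℕ → V) (k : ℕ),
      (pref π (k + 1)).foldl up (A.owner v0)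
        = up ((pref π k).foldl up (A.owner v0)) (π k) := by
    intro π k
    rw [pref_succ', List.foldl_append, List.foldl_cons, List.foldl_nil]
  -- the outcome of σ stays in Y
  have hout : ∀ k, outcome A σ v0 k ∈ Y := by
    intro k
    induction k with
    | zero => exact ⟨0, rfl⟩
    | succ k ih =>
      rw [outcome_succ']
      show nx ((pref (outcome A σ v0) k).foldl up (A.owner v0)) (outcome A σ v0 k) ∈ Y
      show (if outcome A σ v0 k ∈ Y then g (outcome A σ v0 k)
        else f _ (outcome A σ v0 k)) ∈ Y
      rw [if_pos ih]
      exact hg2 _ ih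
  refine ⟨σ, ?_, ?_, ?_⟩
  · -- Nash equilibrium
    intro i τ
    set π : ℕ → V := outcome A (Function.update σ i τ) v0 with hπ
    have inv : ∀ k, π k ∈ R i ∧
        (π k ∈ Y ∨ (pref π k).foldl up (A.owner v0) = i) := by
      intro k
      induction k with
      | zero =>
        have h0 : π 0 ∈ Y := ⟨0, rfl⟩
        exact ⟨hYR _ h0 i, Or.inl h0⟩
      | succ k ih =>
        have hstep : π (k + 1)
            = ((Function.update σ i τ) (A.owner (π k))).next (pref π k) (π k) :=
          outcome_succ' A (Function.update σ i τ) v0 k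
        have hE : A.E (π k) (π (k + 1)) := isPlay_outcome A (Function.update σ i τ) v0 k
        have hupk : (pref π (k + 1)).foldl up (A.owner v0)
            = if π k ∈ Y then A.owner (π k) else (pref π k).foldl up (A.owner v0) := by
          rw [hfold π k]
        by_cases ho : A.owner (π k) = i
        · refine ⟨devReach_closed A σ' v0 i ih.1 ho hE, ?_⟩
          by_cases hy : π (k + 1) ∈ Y
          · exact Or.inl hy
          · right
            rw [hupk]
            by_cases hky : π k ∈ Y
            · rw [if_pos hky]; exact ho
            · rw [if_neg hky]; exact ih.2.resolve_left hky
        · have hmove : π (k + 1)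
              = nx ((pref π k).foldl up (A.owner v0)) (π k) := by
            rw [hstep, Function.update_of_ne ho]
          by_cases hky : π k ∈ Y
          · have hyn : π (k + 1) ∈ Y := by
              rw [hmove]
              show (if π k ∈ Y then g (π k) else f _ (π k)) ∈ Y
              rw [if_pos hky]
              exact hg2 _ hky
            exact ⟨hYR _ hyn i, Or.inl hyn⟩
          · have hs : (pref π k).foldl up (A.owner v0) = i := ih.2.resolve_left hky
            have hmem : π (k + 1) ∈ R i := by
              rw [hmove, hs]
              show (if π k ∈ Y then g (π k) else f i (π k)) ∈ R i
              rw [if_neg hky]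
              exact hf2 i _ ih.1
            refine ⟨hmem, ?_⟩
            by_cases hy2 : π (k + 1) ∈ Y
            · exact Or.inl hy2
            · right
              rw [hupk, if_neg hky]
              exact hs
    have hdev : spCost w (T i) π = ⊤ :=
      (spCost_eq_top_iff _ _ _).2 fun k => hRT i _ (inv k).1
    show spCost w (T i) (outcome A σ v0) ≤ spCost w (T i) π
    rw [hdev]
    exact le_top
  · -- no target visited
    intro i k
    exact hRT i _ (hYR _ (hout k) i)
  · -- memory bound
    intro i
    refine ⟨Fin n, mm, inferInstance, ?_, fun h v => rfl⟩
    simp [Nat.card_eq_fintype_card]
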